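/- With d_s defined as above, if s and t are finite binary sequences of the same length with s <_lex t, then d_s < d_t. -/
import Mathlib

/-- `d_{x|n}` for a binary sequence `x` (with coordinates indexed from 1):
`d_s = ∑_{1 ≤ k ≤ lh(s)} e^{s|k}_{lh(s)}`, where `e^{s|k}` is the zero sequence
if `s_k = 0`, and `e^{s|k}_i = (9/10^k)·(1/2^(i-k+1))` for `i ≥ k` if `s_k = 1`. -/
noncomputable def dAddr (x : ℕ → Bool) (n : ℕ) : ℝ :=
  ∑ k ∈ Finset.Icc 1 n, (if x k then (9 / 10 ^ k : ℝ) * (1 / 2 ^ (n - k + 1)) else 0)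


lemma geo5 (m : ℕ) : ∀ n, m ≤ n →
    ∑ k ∈ Finset.Ioc m n, ((1:ℝ)/5)^k = ((1/5)^m - (1/5)^n)/4 := by
  intro n
  induction n with
  | zero => intro h; interval_cases m; simp
  | succ n ih =>
    intro h
    rcases Nat.lt_or_ge m (n+1) with h' | h'
    · have hmn : m ≤ n := Nat.lt_succ_iff.mp h'
      rw [Finset.sum_Ioc_succ_top (by omega), ih hmn]
      ring
    · have : m = n + 1 := le_antisymm h h'
      subst this; simp

lemma term_eq {k n : ℕ} (hk : k ≤ n) :
    (9 / 10 ^ k : ℝ) * (1 / 2 ^ (n - k + 1)) = 9 / 2 ^ (n+1) * (1/5)^k := by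
  have h10 : (10:ℝ)^k = 2^k * 5^k := by rw [← mul_pow]; norm_num
  have h2 : (2:ℝ)^(n-k+1) * 2^k = 2^(n+1) := by rw [← pow_add]; congr 1; omega
  have h5 : ((1:ℝ)/5)^k = 1/5^k := by rw [div_pow]; norm_num
  rw [h10, h5]
  field_simp
  nlinarith [h2, pow_pos (by norm_num : (0:ℝ) < 2) k, pow_pos (by norm_num : (0:ℝ) < 5) k]

lemma tail_lt {m n : ℕ} (hmn : m ≤ n) :
    ∑ k ∈ Finset.Ioc m n, (9 / 10 ^ k : ℝ) * (1 / 2 ^ (n - k + 1))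
      < (9 / 10 ^ m : ℝ) * (1 / 2 ^ (n - m + 1)) := by
  have hsum : ∑ k ∈ Finset.Ioc m n, (9 / 10 ^ k : ℝ) * (1 / 2 ^ (n - k + 1))
      = 9 / 2 ^ (n+1) * (((1/5)^m - (1/5)^n)/4) := by
    rw [← geo5 m n hmn, Finset.mul_sum]
    refine Finset.sum_congr rfl fun k hk => ?_
    exact term_eq (Finset.mem_Ioc.mp hk).2
  rw [hsum, term_eq hmn]
  have hc : (0:ℝ) < 9 / 2 ^ (n+1) := by positivity
  have h5n : (0:ℝ) < (1/5:ℝ)^n := by positivity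
  have : ((1/5:ℝ)^m - (1/5)^n)/4 < (1/5)^m := by nlinarith [h5n, pow_pos (by norm_num : (0:ℝ) < 1/5) m]
  nlinarith [hc, this]

/-- If `s` and `t` are finite binary sequences of the same length `n` with
`s <_lex t` (first difference at index `m`, where `s_m = 0` and `t_m = 1`),
then `d_s < d_t`. -/
theorem stmt9 (s t : ℕ → Bool) (n m : ℕ) (hm1 : 1 ≤ m) (hmn : m ≤ n)
    (hagree : ∀ k < m, s k = t k) (hs : s m = false) (ht : t m = true) :
    dAddr s n < dAddr t n := by
  have hsplit : ∀ x : ℕ → Bool, dAddr x n =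
      (∑ k ∈ Finset.Icc 1 (m-1), (if x k then (9 / 10 ^ k : ℝ) * (1 / 2 ^ (n - k + 1)) else 0))
      + (if x m then (9 / 10 ^ m : ℝ) * (1 / 2 ^ (n - m + 1)) else 0)
      + (∑ k ∈ Finset.Ioc m n, (if x k then (9 / 10 ^ k : ℝ) * (1 / 2 ^ (n - k + 1)) else 0)) := by
    intro x
    unfold dAddr
    have h1 : Finset.Icc 1 n = Finset.Icc 1 m ∪ Finset.Ioc m n := by
      ext k; simp [Finset.mem_Icc, Finset.mem_Ioc, Finset.mem_union]; omega
    have h2 : Finset.Icc 1 m = Finset.Icc 1 (m-1) ∪ {m} := by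
      ext k; simp [Finset.mem_Icc, Finset.mem_union]; omega
    rw [h1, Finset.sum_union (by simp [Finset.disjoint_left, Finset.mem_Icc, Finset.mem_Ioc]; omega),
        h2, Finset.sum_union (by simp [Finset.disjoint_left, Finset.mem_Icc]; omega)]
    simp
  rw [hsplit s, hsplit t]
  have hcommon : (∑ k ∈ Finset.Icc 1 (m-1), (if s k then (9 / 10 ^ k : ℝ) * (1 / 2 ^ (n - k + 1)) else 0))
      = (∑ k ∈ Finset.Icc 1 (m-1), (if t k then (9 / 10 ^ k : ℝ) * (1 / 2 ^ (n - k + 1)) else 0)) := by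
    refine Finset.sum_congr rfl fun k hk => ?_
    rw [hagree k (by have := (Finset.mem_Icc.mp hk).2; omega)]
  rw [hcommon, hs, ht]
  simp only [if_true, if_false, Bool.false_eq_true]
  have hstail : (∑ k ∈ Finset.Ioc m n, (if s k then (9 / 10 ^ k : ℝ) * (1 / 2 ^ (n - k + 1)) else 0))
      ≤ ∑ k ∈ Finset.Ioc m n, (9 / 10 ^ k : ℝ) * (1 / 2 ^ (n - k + 1)) := by
    refine Finset.sum_le_sum fun k _ => ?_
    split
    · exact le_rfl
    · positivity
  have httail : (0:ℝ) ≤ ∑ k ∈ Finset.Ioc m n, (if t k then (9 / 10 ^ k : ℝ) * (1 / 2 ^ (n - k + 1)) else 0) := by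
    refine Finset.sum_nonneg fun k _ => ?_
    split <;> positivity
  have := tail_lt hmn
  linarith
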